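/- arXiv:1806.10096 — 2 statements merged into one kernel-verified Lean document; each statement's English description precedes it below -/
import Mathlib

section
/- Let G = (V,E) be an infinite, locally finite tree (a connected acyclic simple graph) in which every vertex has degree at least 2, equipped with edge lengths ℓ : E → (0,∞). Let U ⊆ V be a finite, nonempty, connected vertex set and let G̃ be the star-like subgraph with edge set Ẽ := ⋃_{v∈U} E_v. For an edge e with endpoints u and v set c(e) := 1/ℓ(e) − 1/m(u) − 1/m(v). Then Σ_{e∈Ẽ} c(e)·ℓ(e) ≤ deg(∂G̃). -/
open scoped BigOperators

noncomputable section

variable {V : Type*}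

/-- Total length of a set of edges. -/
def mes (ℓ : Sym2 V → ℝ) (E : Set (Sym2 V)) : ℝ := ∑ᶠ e ∈ E, ℓ e

/-- Weight `m(v)` of a vertex: total length of the edges incident to `v`. -/
def mval (G : SimpleGraph V) (ℓ : Sym2 V → ℝ) (v : V) : ℝ := ∑ᶠ e ∈ G.incidenceSet v, ℓ e

/-- Characteristic value of an edge (tree case: no tile terms). -/
def cVal (G : SimpleGraph V) (ℓ : Sym2 V → ℝ) (e : Sym2 V) : ℝ :=
  1 / ℓ e - ∑ᶠ w ∈ {w : V | w ∈ e}, 1 / mval G ℓ w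

/-- Boundary vertices of a subgraph. -/
def bdry (G : SimpleGraph V) (H : G.Subgraph) : Set V :=
  {v ∈ H.verts | (H.neighborSet v).ncard < (G.neighborSet v).ncard}

/-- Total (subgraph-)degree of the boundary of a subgraph. -/
def degBdry (G : SimpleGraph V) (H : G.Subgraph) : ℝ :=
  ∑ᶠ v ∈ bdry G H, ((H.neighborSet v).ncard : ℝ)

/-- Isoperimetric constant of a metric graph. -/
def alpha (G : SimpleGraph V) (ℓ : Sym2 V → ℝ) : ℝ :=
  sInf {x | ∃ H : G.Subgraph, H.verts.Finite ∧ H.Connected ∧ H.edgeSet.Nonempty ∧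
    x = degBdry G H / mes ℓ H.edgeSet}

/-- The star-like subgraph generated by a vertex set `U`: its edges are all the
edges of `G` incident to some vertex of `U`. -/
def starSubgraph (G : SimpleGraph V) (U : Set V) : G.Subgraph where
  verts := U ∪ {w | ∃ u ∈ U, G.Adj u w}
  Adj u w := G.Adj u w ∧ (u ∈ U ∨ w ∈ U)
  adj_sub h := h.1
  edge_vert h := h.2.elim (fun h' => Or.inl h') (fun h' => Or.inr ⟨_, h', h.1.symm⟩)
  symm := ⟨fun u w h => ⟨h.1.symm, h.2.symm⟩⟩

/-!
Write `c(e) ℓ(e) = 1 - Σ_{w ∈ e} ℓ(e) / m(w)`. At a vertex `u ∈ U` all incident edges lie in `G̃`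
and their weights `ℓ(e) / m(u)` sum to `1`, so the left-hand side is at most `|Ẽ| - |U|`.
As a finite subtree, `G̃` has `|Ẽ| = |Ṽ| - 1`. A vertex `w ∈ Ṽ \ U` has exactly one neighbour in
`U`, since two would close a cycle through the connected set `U`; hence
`deg_G̃(w) = 1 < 2 ≤ deg_G(w)`, so `∂G̃ = Ṽ \ U` and `deg(∂G̃) = |Ṽ| - |U|`.
-/

open Finset SimpleGraph

namespace SimpleGraph

variable {G : SimpleGraph V}

lemma Subgraph.ncard_edgeSet_add_one_of_isTree {H : G.Subgraph} (hH : H.coe.IsTree)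
    (hfin : H.verts.Finite) : H.edgeSet.ncard + 1 = H.verts.ncard := by
  have := hfin.to_subtype
  rw [← H.image_coe_edgeSet_coe,
    Set.ncard_image_of_injective _ (Sym2.map.injective Subtype.val_injective)]
  exact (isTree_iff_connected_and_card.mp hH).2

lemma IsAcyclic.subsingleton_neighborSet_inter (hG : G.IsAcyclic) {U : Set V}
    (hU : (G.induce U).Preconnected) {w : V} (hw : w ∉ U) :
    (G.neighborSet w ∩ U).Subsingleton := by
  rintro u₁ ⟨h₁, hu₁⟩ u₂ ⟨h₂, hu₂⟩
  by_contra hne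
  obtain ⟨q⟩ := hU ⟨u₂, hu₂⟩ ⟨u₁, hu₁⟩
  have hmem := isBridge_iff_forall_walk_mem_edges.mp (isAcyclic_iff_forall_adj_isBridge.mp hG h₁)
    (.cons h₂ (q.map (Embedding.induce U).toHom))
  -- `s(w, u₁)` is a bridge, yet the walk `w → u₂ ⇝ u₁` through `U` avoids it.
  rcases List.mem_cons.mp hmem with h | h
  · exact hne (Sym2.congr_right.mp h)
  · have hw' : w ∈ (q.map (Embedding.induce U).toHom).support :=
      Walk.fst_mem_support_of_mem_edges _ h
    rw [Walk.support_map, List.mem_map] at hw'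
    obtain ⟨x, -, hx⟩ := hw'
    exact hw (hx ▸ x.2)

end SimpleGraph

section Weights

variable {G : SimpleGraph V} {ℓ : Sym2 V → ℝ}

lemma cVal_mul_self [DecidableEq V] {e : Sym2 V} (he : ℓ e ≠ 0) :
    cVal G ℓ e * ℓ e = 1 - ∑ w ∈ e.toFinset, ℓ e / mval G ℓ w := by
  have hends : {w : V | w ∈ e} = ↑e.toFinset := by ext; simp [Sym2.mem_toFinset]
  rw [cVal, hends, finsum_mem_coe_finset, sub_mul, sum_mul, one_div_mul_cancel he]
  simp only [one_div_mul_eq_div]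

variable [DecidableEq V] [G.LocallyFinite]

lemma mval_eq_sum (v : V) : mval G ℓ v = ∑ e ∈ G.incidenceFinset v, ℓ e := by
  rw [mval, ← coe_incidenceFinset, finsum_mem_coe_finset]

lemma mval_nonneg (hpos : ∀ e ∈ G.edgeSet, 0 < ℓ e) (v : V) : 0 ≤ mval G ℓ v := by
  rw [mval_eq_sum]
  exact sum_nonneg fun e he =>
    (hpos e (G.incidenceSet_subset v ((mem_incidenceFinset _ _ _).1 he))).le

lemma mval_pos (hpos : ∀ e ∈ G.edgeSet, 0 < ℓ e) {v : V} (hv : (G.neighborSet v).Nonempty) :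
    0 < mval G ℓ v := by
  obtain ⟨w, hw⟩ := hv
  rw [mval_eq_sum]
  exact sum_pos (fun e he => hpos e (G.incidenceSet_subset v ((mem_incidenceFinset _ _ _).1 he)))
    ⟨s(v, w), (mem_incidenceFinset _ _ _).2 ((G.mem_incidenceSet v w).2 hw)⟩

lemma sum_incidenceFinset_div_mval {v : V} (hv : mval G ℓ v ≠ 0) :
    ∑ e ∈ G.incidenceFinset v, ℓ e / mval G ℓ v = 1 := by
  rw [← sum_div, ← mval_eq_sum, div_self hv]

lemma sum_cVal_mul_le (hpos : ∀ e ∈ G.edgeSet, 0 < ℓ e) {F : Finset (Sym2 V)} {s : Finset V}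
    (hF : ↑F ⊆ G.edgeSet) (hinc : ∀ u ∈ s, G.incidenceFinset u ⊆ F)
    (hs : ∀ u ∈ s, (G.neighborSet u).Nonempty) :
    ∑ e ∈ F, cVal G ℓ e * ℓ e ≤ #F - #s := by
  have hincF : ∀ u ∈ s, G.incidenceFinset u = {e ∈ F | u ∈ e} := fun u hu => by
    ext e
    simp only [mem_filter, mem_incidenceFinset]
    exact ⟨fun he => ⟨hinc u hu ((mem_incidenceFinset _ _ _).2 he), he.2⟩,
      fun he => ⟨hF he.1, he.2⟩⟩
  have habsorb : (#s : ℝ) ≤ ∑ e ∈ F, ∑ w ∈ e.toFinset, ℓ e / mval G ℓ w := calc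
    (#s : ℝ) = ∑ u ∈ s, ∑ e ∈ {e ∈ F | u ∈ e}, ℓ e / mval G ℓ u := by
        rw [card_eq_sum_ones, Nat.cast_sum]
        refine sum_congr rfl fun u hu => ?_
        rw [← hincF u hu, sum_incidenceFinset_div_mval (mval_pos hpos (hs u hu)).ne',
          Nat.cast_one]
    _ = ∑ e ∈ F, ∑ w ∈ e.toFinset ∩ s, ℓ e / mval G ℓ w :=
        sum_comm' fun u e => by simp only [mem_filter, mem_inter, Sym2.mem_toFinset]; tauto
    _ ≤ ∑ e ∈ F, ∑ w ∈ e.toFinset, ℓ e / mval G ℓ w :=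
        sum_le_sum fun e he => sum_le_sum_of_subset_of_nonneg inter_subset_left
          fun w _ _ => div_nonneg (hpos e (hF he)).le (mval_nonneg hpos w)
  calc ∑ e ∈ F, cVal G ℓ e * ℓ e
      = #F - ∑ e ∈ F, ∑ w ∈ e.toFinset, ℓ e / mval G ℓ w := by
        rw [sum_congr rfl fun e he => cVal_mul_self (hpos e (hF he)).ne', sum_sub_distrib,
          sum_const, nsmul_one]
    _ ≤ #F - #s := by linarith

end Weights

section Star

variable (G : SimpleGraph V)

lemma starSubgraph_edgeSet [DecidableEq V] [G.LocallyFinite] (s : Finset V) :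
    (starSubgraph G s).edgeSet = ↑(s.biUnion fun u => G.incidenceFinset u) := by
  ext e
  induction e using Sym2.ind with
  | _ a b =>
    simp only [starSubgraph, SetLike.mem_coe, Subgraph.mem_edgeSet, coe_biUnion,
      coe_incidenceFinset, Set.mem_iUnion, mk'_mem_incidenceSet_iff, exists_and_left, exists_prop,
      and_congr_right_iff]
    grind

lemma finite_starSubgraph_verts [G.LocallyFinite] {U : Set V} (hU : U.Finite) :
    (starSubgraph G U).verts.Finite :=
  hU.union <| (hU.biUnion fun u _ => (G.neighborSet u).toFinite).subset
    fun _ ⟨_, hu, huw⟩ => Set.mem_biUnion hu huw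

variable {G}

lemma starSubgraph_connected {U : Set V} (hU : (G.induce U).Connected) :
    (starSubgraph G U).Connected := by
  set H := starSubgraph G U
  let ι : G.induce U →g H.coe :=
    { toFun := fun u => ⟨u, Or.inl u.2⟩, map_rel' := fun {u _} h => ⟨h, Or.inl u.2⟩ }
  obtain ⟨u₀⟩ := hU.nonempty
  have hreach : ∀ v : H.verts, H.coe.Reachable v (ι u₀) := by
    rintro ⟨v, hv | ⟨u, hu, huv⟩⟩
    · exact (hU.preconnected ⟨v, hv⟩ u₀).map ι
    · exact (Adj.reachable (show H.Adj v u from ⟨huv.symm, Or.inr hu⟩)).trans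
        ((hU.preconnected ⟨u, hu⟩ u₀).map ι)
  exact Subgraph.connected_iff.mpr ⟨Subgraph.preconnected_iff.mpr
    fun v w => (hreach v).trans (hreach w).symm, ⟨u₀, Or.inl u₀.2⟩⟩

lemma neighborSet_starSubgraph_of_mem {U : Set V} {u : V} (hu : u ∈ U) :
    (starSubgraph G U).neighborSet u = G.neighborSet u :=
  Set.ext fun _ => ⟨And.left, fun h => ⟨h, Or.inl hu⟩⟩

lemma neighborSet_starSubgraph_of_notMem {U : Set V} {w : V} (hw : w ∉ U) :
    (starSubgraph G U).neighborSet w = G.neighborSet w ∩ U :=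
  Set.ext fun _ => ⟨fun h => ⟨h.1, h.2.resolve_left hw⟩, fun h => ⟨h.1, Or.inr h.2⟩⟩

lemma ncard_neighborSet_starSubgraph (hG : G.IsAcyclic) {U : Set V}
    (hU : (G.induce U).Preconnected) {w : V} (hw : w ∈ (starSubgraph G U).verts \ U) :
    ((starSubgraph G U).neighborSet w).ncard = 1 := by
  obtain ⟨hw | ⟨u, hu, huw⟩, hwU⟩ := hw
  · exact absurd hw hwU
  rw [neighborSet_starSubgraph_of_notMem hwU,
    (hG.subsingleton_neighborSet_inter hU hwU).eq_singleton_of_mem ⟨huw.symm, hu⟩,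
    Set.ncard_singleton]

lemma bdry_starSubgraph (hG : G.IsAcyclic) (hdeg : ∀ v : V, 2 ≤ (G.neighborSet v).ncard)
    {U : Set V} (hU : (G.induce U).Preconnected) :
    bdry G (starSubgraph G U) = (starSubgraph G U).verts \ U := by
  ext v
  refine ⟨fun ⟨hv, hlt⟩ => ⟨hv, fun hvU => ?_⟩, fun hv => ⟨hv.1, ?_⟩⟩
  · rw [neighborSet_starSubgraph_of_mem hvU] at hlt
    exact hlt.false
  · rw [ncard_neighborSet_starSubgraph hG hU hv]
    exact (hdeg v).trans_lt' one_lt_two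

lemma degBdry_starSubgraph (hG : G.IsAcyclic) (hdeg : ∀ v : V, 2 ≤ (G.neighborSet v).ncard)
    {U : Set V} (hU : (G.induce U).Preconnected) (hfin : (starSubgraph G U).verts.Finite) :
    degBdry G (starSubgraph G U) = ((starSubgraph G U).verts \ U).ncard := by
  rw [degBdry, bdry_starSubgraph hG hdeg hU,
    finsum_mem_congr rfl fun w hw => by rw [ncard_neighborSet_starSubgraph hG hU hw, Nat.cast_one],
    ← finsum_one, Nat.cast_finsum_mem hfin.sdiff, Nat.cast_one]

end Star

theorem statement_3_general {V : Type*} (G : SimpleGraph V)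
    (hacyc : G.IsAcyclic)
    (hlf : ∀ v : V, (G.neighborSet v).Finite)
    (hdeg : ∀ v : V, 2 ≤ (G.neighborSet v).ncard)
    (ℓ : Sym2 V → ℝ) (hpos : ∀ e ∈ G.edgeSet, 0 < ℓ e)
    (U : Set V) (hUfin : U.Finite) (hUconn : (G.induce U).Connected) :
    ∑ᶠ e ∈ (starSubgraph G U).edgeSet, cVal G ℓ e * ℓ e
      ≤ degBdry G (starSubgraph G U) := by
  classical
  let : G.LocallyFinite := fun v => (hlf v).fintype
  obtain ⟨s, rfl⟩ := hUfin.exists_finset_coe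
  have hfin := finite_starSubgraph_verts G s.finite_toSet
  have hedges := starSubgraph_edgeSet G s
  have htree : (starSubgraph G s).coe.IsTree :=
    ⟨(starSubgraph_connected hUconn).coe, hacyc.subgraph _⟩
  have hcount := Subgraph.ncard_edgeSet_add_one_of_isTree htree hfin
  have hsplit := Set.ncard_sdiff_add_ncard_of_subset Set.subset_union_left hfin
  rw [hedges, Set.ncard_coe_finset] at hcount
  rw [Set.ncard_coe_finset] at hsplit
  have hsum := sum_cVal_mul_le hpos (hedges ▸ (starSubgraph G s).edgeSet_subset)
    (fun u hu => subset_biUnion_of_mem (fun u => G.incidenceFinset u) hu)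
    (fun u _ => Set.nonempty_of_ncard_ne_zero (by have := hdeg u; omega))
  rw [degBdry_starSubgraph hacyc hdeg hUconn.preconnected hfin, hedges, finsum_mem_coe_finset]
  have hcard : (#(s.biUnion fun u => G.incidenceFinset u) : ℝ) + 1
      = ((starSubgraph G s).verts \ s).ncard + #s := by exact_mod_cast hcount.trans hsplit.symm
  linarith

/-- For an infinite, locally finite metric tree with all degrees at least 2
and a star-like subgraph generated by a finite nonempty connected vertex set `U`,
`Σ_{e∈Ẽ} c(e)·ℓ(e) ≤ deg(∂G̃)`. -/
theorem statement_3 {V : Type*} [Infinite V] (G : SimpleGraph V)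
    (hconn : G.Connected) (hacyc : G.IsAcyclic)
    (hlf : ∀ v : V, (G.neighborSet v).Finite)
    (hdeg : ∀ v : V, 2 ≤ (G.neighborSet v).ncard)
    (ℓ : Sym2 V → ℝ) (hpos : ∀ e ∈ G.edgeSet, 0 < ℓ e)
    (U : Set V) (hUfin : U.Finite) (hUne : U.Nonempty) (hUconn : (G.induce U).Connected) :
    ∑ᶠ e ∈ (starSubgraph G U).edgeSet, cVal G ℓ e * ℓ e
      ≤ degBdry G (starSubgraph G U) :=
  statement_3_general G hacyc hlf hdeg ℓ hpos U hUfin hUconn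
end
end

section
/- Let p ≥ 6 be an integer and let G = (V,E) be an infinite tree (a connected acyclic simple graph) in which every vertex has degree exactly p. Fix an edge ê ∈ E and define edge lengths ℓ : E → (0,∞) by ℓ(ê) = p and ℓ(e) = 1 for all e ≠ ê. Then α(G) = 2/p. -/
/-!
The single edge `ê` is a subgraph whose two endpoints are boundary vertices of degree one, so
its ratio is `2 / p`. Conversely, a finite connected subgraph `H` of the tree is itself a tree.
If it has `n` vertices, `k` of them of full degree `p`, and `D = deg(∂H)`, the handshake
identity reads `D + p k = 2 (n - 1)`, and since every vertex of `H` has degree at least one,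
`D ≥ n - k`. Together these give `D ≥ (p - 2) k + 2`, which for `p ≥ 4` yields
`p D ≥ 2 (n - 1) + 2 (p - 1) ≥ 2 mes(H)`.
-/

open scoped BigOperators

noncomputable section

variable {V : Type*}

open Finset

theorem two_mul_card_add_le_mul_sum_filter_lt {α : Type*} {s : Finset α} {d : α → ℕ} {p : ℕ}
    (hp : 4 ≤ p) (hpos : ∀ v ∈ s, 1 ≤ d v) (hle : ∀ v ∈ s, d v ≤ p)
    (hsum : ∑ v ∈ s, d v + 2 = 2 * #s) :
    2 * (#s + p) ≤ p * ∑ v ∈ s with d v < p, d v + 4 := by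
  have hsplit := sum_filter_add_sum_filter_not s (fun v => d v < p) d
  have hcard := card_filter_add_card_filter_not (s := s) (fun v => d v < p)
  have hfull : ∑ v ∈ s with ¬d v < p, d v = p * #{v ∈ s | ¬d v < p} := by
    rw [sum_congr rfl fun v hv => ?_, sum_const, smul_eq_mul, mul_comm]
    rw [mem_filter] at hv
    exact le_antisymm (hle v hv.1) (not_lt.mp hv.2)
  have hbdry : #{v ∈ s | d v < p} ≤ ∑ v ∈ s with d v < p, d v := by
    simpa using card_nsmul_le_sum _ d 1 fun v hv => hpos v (mem_filter.mp hv).1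
  generalize ∑ v ∈ s with d v < p, d v = D at *
  generalize #{v ∈ s | ¬d v < p} = k at *
  have hD : p * k + 2 ≤ D + 2 * k := by omega
  -- `hD` says `D ≥ (p - 2) k + 2`; conclude with `(p - 1) (p - 2) ≥ p` for `p ≥ 4`.
  nlinarith [Nat.mul_le_mul_right k (Nat.mul_le_mul_right p hp)]

namespace SimpleGraph.Subgraph

variable {G : SimpleGraph V} {H : G.Subgraph}

lemma ncard_edgeSet_eq_natCard_coe_edgeSet (H : G.Subgraph) :
    H.edgeSet.ncard = Nat.card H.coe.edgeSet := by
  rw [← image_coe_edgeSet_coe,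
    Set.ncard_image_of_injective _ (Sym2.map.injective Subtype.val_injective), Nat.card_coe_set_eq]

lemma finite_edgeSet (hfin : H.verts.Finite) : H.edgeSet.Finite := by
  have := hfin.to_subtype
  rw [← image_coe_edgeSet_coe]
  exact (Set.toFinite _).image _

lemma sum_ncard_neighborSet_eq_two_mul (hfin : H.verts.Finite) :
    ∑ v ∈ hfin.toFinset, (H.neighborSet v).ncard = 2 * H.edgeSet.ncard := by
  classical
  have := hfin.fintype
  rw [ncard_edgeSet_eq_natCard_coe_edgeSet, Nat.card_eq_card_toFinset, ← edgeFinset,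
    ← H.coe.sum_degrees_eq_twice_card_edges, Finset.sum_subtype _ (fun _ => hfin.mem_toFinset)]
  refine Finset.sum_congr rfl fun v _ => ?_
  rw [← Nat.card_coe_set_eq, ← Nat.card_congr (coeNeighborSetEquiv v), Nat.card_eq_fintype_card]
  convert H.coe.card_neighborSet_eq_degree v

lemma Connected.ncard_edgeSet_add_one (hconn : H.Connected) (hacyc : G.IsAcyclic)
    (hfin : H.verts.Finite) : H.edgeSet.ncard + 1 = H.verts.ncard := by
  have := hfin.to_subtype
  rw [ncard_edgeSet_eq_natCard_coe_edgeSet, ← Nat.card_coe_set_eq]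
  exact (isTree_iff_connected_and_card.mp ⟨hconn.coe, hacyc.subgraph H⟩).2

lemma Connected.neighborSet_nonempty (hconn : H.Connected) (hE : H.edgeSet.Nonempty) {v : V}
    (hv : v ∈ H.verts) : (H.neighborSet v).Nonempty := by
  obtain ⟨e, he⟩ := hE
  induction e using Sym2.ind with
  | _ a b =>
    have : Nontrivial H.verts :=
      ⟨⟨a, H.edge_vert he⟩, ⟨b, H.edge_vert he.symm⟩, by simpa using he.ne⟩
    exact hconn.preconnected.exists_adj_of_nontrivial ⟨v, hv⟩

end SimpleGraph.Subgraph

open SimpleGraph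

lemma bdry_eq_filter_ncard_lt {G : SimpleGraph V} {p : ℕ}
    (hreg : ∀ v, (G.neighborSet v).ncard = p) {H : G.Subgraph} (hfin : H.verts.Finite) :
    bdry G H = ↑{v ∈ hfin.toFinset | (H.neighborSet v).ncard < p} := by
  ext v
  simp [bdry, hreg]

theorem two_mul_ncard_edgeSet_add_le_mul_degBdry {G : SimpleGraph V} {p : ℕ} (hp : 4 ≤ p)
    (hacyc : G.IsAcyclic) (hreg : ∀ v, (G.neighborSet v).ncard = p) {H : G.Subgraph}
    (hfin : H.verts.Finite) (hconn : H.Connected) (hE : H.edgeSet.Nonempty) :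
    2 * ((H.edgeSet.ncard : ℝ) + (p - 1)) ≤ p * degBdry G H := by
  have hGfin : ∀ v, (G.neighborSet v).Finite := fun v =>
    Set.finite_of_ncard_pos (by rw [hreg v]; omega)
  have hle : ∀ v ∈ hfin.toFinset, (H.neighborSet v).ncard ≤ p := fun v _ =>
    hreg v ▸ Set.ncard_le_ncard (H.neighborSet_subset v) (hGfin v)
  have hpos : ∀ v ∈ hfin.toFinset, 1 ≤ (H.neighborSet v).ncard := fun v hv =>
    (Set.ncard_pos ((hGfin v).subset (H.neighborSet_subset v))).2
      (hconn.neighborSet_nonempty hE (hfin.mem_toFinset.1 hv))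
  have htree := hconn.ncard_edgeSet_add_one hacyc hfin
  rw [Set.ncard_eq_toFinset_card _ hfin] at htree
  have hsum : ∑ v ∈ hfin.toFinset, (H.neighborSet v).ncard + 2 = 2 * #hfin.toFinset := by
    rw [Subgraph.sum_ncard_neighborSet_eq_two_mul hfin]; omega
  have key : (2 * (#hfin.toFinset + p) : ℝ) ≤
      p * ∑ v ∈ hfin.toFinset with (H.neighborSet v).ncard < p, ((H.neighborSet v).ncard : ℝ)
        + 4 := by
    exact_mod_cast two_mul_card_add_le_mul_sum_filter_lt hp hpos hle hsum
  rw [degBdry, bdry_eq_filter_ncard_lt hreg hfin, finsum_mem_coe_finset]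
  have : (H.edgeSet.ncard : ℝ) + 1 = #hfin.toFinset := by exact_mod_cast htree
  linarith

lemma degBdry_subgraphOfAdj {G : SimpleGraph V} {a b : V} (hab : G.Adj a b)
    (ha : 1 < (G.neighborSet a).ncard) (hb : 1 < (G.neighborSet b).ncard) :
    degBdry G (G.subgraphOfAdj hab) = 2 := by
  have hbdry : bdry G (G.subgraphOfAdj hab) = {a, b} := by
    ext v
    simp only [bdry, Set.mem_ofPred_eq, subgraphOfAdj_verts, and_iff_left_iff_imp]
    rintro (rfl | rfl)
    · rwa [neighborSet_fst_subgraphOfAdj, Set.ncard_singleton]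
    · rwa [neighborSet_snd_subgraphOfAdj, Set.ncard_singleton]
  rw [degBdry, hbdry, finsum_mem_pair hab.ne, neighborSet_fst_subgraphOfAdj,
    neighborSet_snd_subgraphOfAdj, Set.ncard_singleton]
  norm_num

lemma mes_eq_sum {ℓ : Sym2 V → ℝ} {E : Set (Sym2 V)} (hE : E.Finite) :
    mes ℓ E = ∑ e ∈ hE.toFinset, ℓ e :=
  finsum_mem_eq_finite_toFinset_sum ℓ hE

lemma mes_pos {ℓ : Sym2 V → ℝ} {E : Set (Sym2 V)} (hE : E.Finite) (hne : E.Nonempty)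
    (hℓ : ∀ e ∈ E, 0 < ℓ e) : 0 < mes ℓ E := by
  rw [mes_eq_sum hE]
  exact Finset.sum_pos (fun e he => hℓ e (hE.mem_toFinset.1 he)) (hE.toFinset_nonempty.2 hne)

lemma mes_ite_le [DecidableEq V] {E : Set (Sym2 V)} (hE : E.Finite) (e₀ : Sym2 V) {c : ℝ}
    (hc : 1 ≤ c) : mes (fun e => if e = e₀ then c else 1) E ≤ E.ncard + (c - 1) := by
  rw [mes_eq_sum hE, Set.ncard_eq_toFinset_card _ hE]
  have hsplit : ∀ e, (if e = e₀ then c else 1) = 1 + if e = e₀ then c - 1 else 0 := by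
    intro e; split_ifs <;> ring
  simp only [hsplit, Finset.sum_add_distrib, Finset.sum_const, nsmul_eq_mul, mul_one,
    Finset.sum_ite_eq']
  split_ifs <;> linarith

theorem statement_17_general {V : Type*} [DecidableEq V] (p : ℕ) (hp : 6 ≤ p)
    (G : SimpleGraph V) (hacyc : G.IsAcyclic)
    (hreg : ∀ v : V, (G.neighborSet v).ncard = p)
    (e₀ : Sym2 V) (he₀ : e₀ ∈ G.edgeSet) :
    alpha G (fun e => if e = e₀ then (p : ℝ) else 1) = 2 / (p : ℝ) := by
  have hp1 : (1 : ℝ) ≤ p := by exact_mod_cast (by omega : 1 ≤ p)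
  refine IsLeast.csInf_eq ⟨?_, ?_⟩
  · induction e₀ using Sym2.ind with
    | _ a b =>
      rw [mem_edgeSet] at he₀
      refine ⟨G.subgraphOfAdj he₀, Set.toFinite {a, b}, Subgraph.subgraphOfAdj_connected he₀,
        ⟨s(a, b), rfl⟩, ?_⟩
      rw [degBdry_subgraphOfAdj he₀ (by rw [hreg]; omega) (by rw [hreg]; omega),
        edgeSet_subgraphOfAdj, mes, finsum_mem_singleton, if_pos rfl]
  · rintro x ⟨H, hfin, hconn, hE, rfl⟩
    have hEfin := H.finite_edgeSet hfin
    have hmes := mes_ite_le hEfin e₀ hp1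
    have hmes_pos : 0 < mes (fun e => if e = e₀ then (p : ℝ) else 1) H.edgeSet :=
      mes_pos hEfin hE fun e _ => by split_ifs <;> linarith
    have key := two_mul_ncard_edgeSet_add_le_mul_degBdry (by omega) hacyc hreg hfin hconn hE
    rw [div_le_div_iff₀ (by linarith) hmes_pos]
    linarith

/-- Example 4.3: for a `p`-regular infinite metric tree (`p ≥ 6`) with one
distinguished edge of length `p` and all other edges of length `1`, `α(G) = 2/p`. -/
theorem statement_17 {V : Type*} [Infinite V] [DecidableEq V] (p : ℕ) (hp : 6 ≤ p)
    (G : SimpleGraph V) (hconn : G.Connected) (hacyc : G.IsAcyclic)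
    (hreg : ∀ v : V, (G.neighborSet v).ncard = p)
    (e₀ : Sym2 V) (he₀ : e₀ ∈ G.edgeSet) :
    alpha G (fun e => if e = e₀ then (p : ℝ) else 1) = 2 / (p : ℝ) :=
  statement_17_general p hp G hacyc hreg e₀ he₀
end
end
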